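/- arXiv:2011.09118 — 3 statements merged into one kernel-verified Lean document; each statement's English description precedes it below -/
import Mathlib

section
/- Let n ≥ 4 and g ∈ GL(n,ℝ). Then there exist λ ∈ {0, 1, 2}, h ∈ H' and k ∈ O(n−1,1) such that the matrix m := h g k has last column equal to eₙ = (0, …, 0, 1)ᵀ and last row equal to (−λ, 0, …, 0, 1). -/
open Matrix

noncomputable section

/-- The Lie bracket of `𝔥₃ ⊕ ℝ^{n-3}` on `ℝⁿ`: `[x, y] = (x₁y₂ - x₂y₁) • eₙ`. -/
def bral (n : ℕ) (hn : 4 ≤ n) (x y : Fin n → ℝ) : Fin n → ℝ :=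
  (x ⟨0, by omega⟩ * y ⟨1, by omega⟩ - x ⟨1, by omega⟩ * y ⟨0, by omega⟩) •
    (Pi.single (⟨n - 1, by omega⟩ : Fin n) (1 : ℝ) : Fin n → ℝ)

/-- The matrix `I_{n-1,1} = diag(1, …, 1, -1)`. -/
def Inm (n : ℕ) : Matrix (Fin n) (Fin n) ℝ :=
  Matrix.diagonal fun i => if (i : ℕ) < n - 1 then 1 else -1

/-- `ε_i = 1` for `i ≤ n-1` (1-based), `ε_n = -1`. -/
def eps (n : ℕ) (i : Fin n) : ℝ := if (i : ℕ) < n - 1 then 1 else -1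

/-- The canonical inner product of signature `(n-1,1)`: `⟨x,y⟩₀ = xᵀ I_{n-1,1} y`. -/
def ip0 (n : ℕ) (x y : Fin n → ℝ) : ℝ := ∑ i : Fin n, eps n i * x i * y i

/-- The indefinite orthogonal group `O(n-1,1)`. -/
def Oset (n : ℕ) : Set (Matrix (Fin n) (Fin n) ℝ) := {k | kᵀ * Inm n * k = Inm n}

/-- The group `ℝ^× · Aut(𝔥₃ ⊕ ℝ^{n-3})`: invertible block lower triangular matrices
with diagonal blocks of sizes `(2, n-3, 1)`. -/
def Hset (n : ℕ) : Set (Matrix (Fin n) (Fin n) ℝ) :=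
  {A | IsUnit A.det ∧ ∀ i j : Fin n,
    ((i : ℕ) < 2 ∧ 2 ≤ (j : ℕ)) ∨ ((i : ℕ) < n - 1 ∧ (j : ℕ) = n - 1) → A i j = 0}

/-- `H' = {hᵀ : h ∈ H}`. -/
def Hset' (n : ℕ) : Set (Matrix (Fin n) (Fin n) ℝ) := {A | Aᵀ ∈ Hset n}

/-- `G_λ`: invertible matrices with last column `eₙ` and last row `(-λ, 0, …, 0, 1)`. -/
def Glam (n : ℕ) (hn : 4 ≤ n) (lam : ℝ) : Set (Matrix (Fin n) (Fin n) ℝ) :=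
  {g | IsUnit g.det ∧
    (∀ i : Fin n, g i ⟨n - 1, by omega⟩ = if (i : ℕ) = n - 1 then 1 else 0) ∧
    (∀ j : Fin n, g ⟨n - 1, by omega⟩ j =
      if (j : ℕ) = n - 1 then 1 else if (j : ℕ) = 0 then -lam else 0)}

/-- The matrix `g_{λ,ξ}`: the identity except that the `(1, n-1)` entry is `ξ` and
the `(1, n)` entry is `λ`. -/
def gmat (n : ℕ) (hn : 4 ≤ n) (lam xi : ℝ) : Matrix (Fin n) (Fin n) ℝ :=
  1 + Matrix.single ⟨0, by omega⟩ ⟨n - 2, by omega⟩ xi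
    + Matrix.single ⟨0, by omega⟩ ⟨n - 1, by omega⟩ lam

/-- The inner product `⟨x,y⟩_{λ,ξ} = ⟨g_{λ,ξ}⁻¹x, g_{λ,ξ}⁻¹y⟩₀`. -/
def ipg (n : ℕ) (hn : 4 ≤ n) (lam xi : ℝ) (x y : Fin n → ℝ) : ℝ :=
  ip0 n ((gmat n hn lam xi)⁻¹.mulVec x) ((gmat n hn lam xi)⁻¹.mulVec y)

/-- `x'_i = g_{λ,ξ} e_i`. -/
def xvec (n : ℕ) (hn : 4 ≤ n) (lam xi : ℝ) (i : Fin n) : Fin n → ℝ :=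
  (gmat n hn lam xi).mulVec (Pi.single i 1)

/-- The parameter set `Λ = {(0,0), (1,0), (1,1), (2,0), (2,√3), (2,2)}`. -/
def Lam : Set (ℝ × ℝ) :=
  {(0, 0), (1, 0), (1, 1), (2, 0), (2, Real.sqrt 3), (2, 2)}

/-!
The last row `u` of `g` is nonzero, and `g ↦ g kᵀ` acts on it by `u ↦ k u`. Reflections in
anisotropic vectors move `u` onto a multiple of `(-λ, 0, …, 0, 1)`, whose square norm `λ² - 1`
has the sign of `⟨u, u⟩₀` for `λ = 0, 1, 2`; in the isotropic case an extra reflection in `e₁` is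
needed when `u ⟂ (-1, 0, …, 0, 1)`. Finally an element of `H'` subtracts multiples of the last
row from the other rows and rescales it, which clears the last column.
-/

section LorentzForm

variable {n : ℕ}

theorem ip0_eq_dotProduct (x y : Fin n → ℝ) : ip0 n x y = x ⬝ᵥ (Inm n *ᵥ y) := by
  simp only [ip0, Inm, mulVec_diagonal, dotProduct, eps]
  exact Finset.sum_congr rfl fun i _ => by ring

theorem ip0_comm (x y : Fin n → ℝ) : ip0 n x y = ip0 n y x :=
  Finset.sum_congr rfl fun _ _ => by ring

@[simp]
theorem ip0_sub_left (x y z : Fin n → ℝ) : ip0 n (x - y) z = ip0 n x z - ip0 n y z := by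
  simp only [ip0_eq_dotProduct, sub_dotProduct]

@[simp]
theorem ip0_sub_right (x y z : Fin n → ℝ) : ip0 n x (y - z) = ip0 n x y - ip0 n x z := by
  simp only [ip0_eq_dotProduct, mulVec_sub, dotProduct_sub]

@[simp]
theorem ip0_smul_left (c : ℝ) (x y : Fin n → ℝ) : ip0 n (c • x) y = c * ip0 n x y := by
  simp only [ip0_eq_dotProduct, smul_dotProduct, smul_eq_mul]

@[simp]
theorem ip0_smul_right (c : ℝ) (x y : Fin n → ℝ) : ip0 n x (c • y) = c * ip0 n x y := by
  simp only [ip0_eq_dotProduct, mulVec_smul, dotProduct_smul, smul_eq_mul]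

@[simp]
theorem ip0_neg_left (x y : Fin n → ℝ) : ip0 n (-x) y = -ip0 n x y := by
  simp only [ip0_eq_dotProduct, neg_dotProduct]

@[simp]
theorem ip0_neg_right (x y : Fin n → ℝ) : ip0 n x (-y) = -ip0 n x y := by
  simp only [ip0_eq_dotProduct, mulVec_neg, dotProduct_neg]

theorem ip0_sub_sub_self (x y : Fin n → ℝ) :
    ip0 n (x - y) (x - y) = ip0 n x x - 2 * ip0 n x y + ip0 n y y := by
  simp only [ip0_sub_left, ip0_sub_right, ip0_comm y x]
  ring

theorem ip0_mulVec_mulVec (k : Matrix (Fin n) (Fin n) ℝ) (x y : Fin n → ℝ) :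
    ip0 n (k *ᵥ x) (k *ᵥ y) = x ⬝ᵥ (kᵀ * Inm n * k) *ᵥ y := by
  rw [ip0_eq_dotProduct, ← vecMul_transpose, ← dotProduct_mulVec, mulVec_mulVec,
    mulVec_mulVec, Matrix.mul_assoc]

end LorentzForm

section IndefiniteOrthogonalGroup

variable {n : ℕ} {k k' : Matrix (Fin n) (Fin n) ℝ}

theorem mem_Oset_iff_ip0_mulVec :
    k ∈ Oset n ↔ ∀ x y, ip0 n (k *ᵥ x) (k *ᵥ y) = ip0 n x y := by
  refine ⟨fun hk x y => by
    rw [ip0_mulVec_mulVec, show kᵀ * Inm n * k = Inm n from hk, ip0_eq_dotProduct], fun H => ?_⟩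
  ext i j
  have hij := H (Pi.single i 1) (Pi.single j 1)
  rwa [ip0_mulVec_mulVec, ip0_eq_dotProduct, mulVec_single_one, mulVec_single_one,
    single_one_dotProduct, single_one_dotProduct] at hij

theorem mul_mem_Oset (hk : k ∈ Oset n) (hk' : k' ∈ Oset n) : k * k' ∈ Oset n := by
  rw [mem_Oset_iff_ip0_mulVec] at *
  intro x y
  rw [← mulVec_mulVec, ← mulVec_mulVec, hk, hk']

theorem Inm_mul_self : Inm n * Inm n = 1 := by
  rw [Inm, diagonal_mul_diagonal, ← diagonal_one]
  congr 1
  ext i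
  split_ifs <;> norm_num

theorem mul_Inm_transpose_Inm_of_mem_Oset (hk : k ∈ Oset n) :
    k * (Inm n * kᵀ * Inm n) = 1 := by
  refine mul_eq_one_comm.mp ?_
  calc Inm n * kᵀ * Inm n * k = Inm n * (kᵀ * Inm n * k) := by simp only [Matrix.mul_assoc]
    _ = 1 := by rw [show kᵀ * Inm n * k = Inm n from hk, Inm_mul_self]

theorem transpose_mem_Oset (hk : k ∈ Oset n) : kᵀ ∈ Oset n :=
  calc kᵀᵀ * Inm n * kᵀ = k * (Inm n * kᵀ * Inm n) * Inm n := by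
        simp only [transpose_transpose, Matrix.mul_assoc, Inm_mul_self, Matrix.mul_one]
    _ = Inm n := by rw [mul_Inm_transpose_Inm_of_mem_Oset hk, Matrix.one_mul]

theorem isUnit_det_of_mem_Oset (hk : k ∈ Oset n) : IsUnit k.det :=
  isUnit_det_of_right_inverse (mul_Inm_transpose_Inm_of_mem_Oset hk)

end IndefiniteOrthogonalGroup

section Reflections

variable {n : ℕ}

def lorentzReflection (v : Fin n → ℝ) : Matrix (Fin n) (Fin n) ℝ :=
  1 - (2 / ip0 n v v) • vecMulVec v (Inm n *ᵥ v)

theorem lorentzReflection_mulVec (v x : Fin n → ℝ) :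
    lorentzReflection v *ᵥ x = x - (2 * ip0 n v x / ip0 n v v) • v := by
  have hvx : (Inm n *ᵥ v) ⬝ᵥ x = ip0 n v x := by
    rw [ip0_comm, ip0_eq_dotProduct, dotProduct_comm]
  ext i
  simp only [lorentzReflection, sub_mulVec, one_mulVec, smul_mulVec, vecMulVec_mulVec, hvx]
  simp only [Pi.sub_apply, Pi.smul_apply, MulOpposite.smul_eq_mul_unop, MulOpposite.unop_op,
    smul_eq_mul]
  ring

theorem lorentzReflection_mem_Oset {v : Fin n → ℝ} (hv : ip0 n v v ≠ 0) :
    lorentzReflection v ∈ Oset n := by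
  rw [mem_Oset_iff_ip0_mulVec]
  intro x y
  simp only [lorentzReflection_mulVec, ip0_sub_left, ip0_sub_right, ip0_smul_left,
    ip0_smul_right, ip0_comm x v]
  field_simp
  ring

theorem lorentzReflection_sub_mulVec {u b : Fin n → ℝ} (hq : ip0 n u u = ip0 n b b)
    (hub : ip0 n (u - b) (u - b) ≠ 0) : lorentzReflection (u - b) *ᵥ u = b := by
  have hcoef : 2 * ip0 n (u - b) u = ip0 n (u - b) (u - b) := by
    rw [ip0_sub_sub_self, ip0_sub_left, ip0_comm b u]
    linarith
  rw [lorentzReflection_mulVec, hcoef, div_self hub, one_smul, sub_sub_cancel]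

theorem exists_mem_Oset_mulVec_eq_of_ip0_sub_ne_zero {u b : Fin n → ℝ}
    (hq : ip0 n u u = ip0 n b b) (hub : ip0 n (u - b) (u - b) ≠ 0) :
    ∃ k ∈ Oset n, k *ᵥ u = b :=
  ⟨_, lorentzReflection_mem_Oset hub, lorentzReflection_sub_mulVec hq hub⟩

theorem exists_mem_Oset_mulVec_eq {u b : Fin n → ℝ} (hq : ip0 n u u = ip0 n b b)
    (hb : ip0 n b b ≠ 0) : ∃ k ∈ Oset n, k *ᵥ u = b := by
  rcases ne_or_eq (ip0 n (u - b) (u - b)) 0 with hub | hub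
  · exact exists_mem_Oset_mulVec_eq_of_ip0_sub_ne_zero hq hub
  -- then `u + b` is anisotropic: reflect `u` to `-b`, then `-b` to `b`
  have hneg : ip0 n (-b) (-b) = ip0 n b b := by simp
  have hu_neg : ip0 n (u - -b) (u - -b) ≠ 0 := by
    rw [ip0_sub_sub_self] at hub ⊢
    simp only [ip0_neg_right, hneg]
    intro h
    exact hb (by linarith)
  have hneg_b : ip0 n (-b - b) (-b - b) ≠ 0 := by
    rw [ip0_sub_sub_self, hneg, ip0_neg_left]
    intro h
    exact hb (by linarith)
  obtain ⟨k₁, hk₁, hu⟩ :=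
    exists_mem_Oset_mulVec_eq_of_ip0_sub_ne_zero (hq.trans hneg.symm) hu_neg
  obtain ⟨k₂, hk₂, hb'⟩ := exists_mem_Oset_mulVec_eq_of_ip0_sub_ne_zero hneg hneg_b
  exact ⟨k₂ * k₁, mul_mem_Oset hk₂ hk₁, by rw [← mulVec_mulVec, hu, hb']⟩

theorem exists_mem_Oset_mulVec_eq_of_isotropic {u w : Fin n → ℝ} (hu : ip0 n u u = 0)
    (hw : ip0 n w w = 0) (huw : ip0 n u w ≠ 0) : ∃ k ∈ Oset n, k *ᵥ u = w := by
  refine exists_mem_Oset_mulVec_eq_of_ip0_sub_ne_zero (hu.trans hw.symm) ?_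
  rw [ip0_sub_sub_self, hu, hw]
  simpa using huw

end Reflections

section GlamRow

variable {n : ℕ}

def glamRow (n : ℕ) (lam : ℝ) : Fin n → ℝ := fun j =>
  if (j : ℕ) = n - 1 then 1 else if (j : ℕ) = 0 then -lam else 0

theorem ip0_glamRow (hn : 2 ≤ n) (u : Fin n → ℝ) (lam : ℝ) :
    ip0 n u (glamRow n lam) = -lam * u ⟨0, by omega⟩ - u ⟨n - 1, by omega⟩ := by
  rw [ip0, Finset.sum_eq_add_of_mem (⟨0, by omega⟩ : Fin n) ⟨n - 1, by omega⟩
    (Finset.mem_univ _) (Finset.mem_univ _) (Fin.ne_of_val_ne (by dsimp; omega))]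
  · simp only [glamRow, eps]
    split_ifs <;> first | omega | ring
  · rintro i - ⟨h0, hlast⟩
    simp only [ne_eq, Fin.ext_iff] at h0 hlast
    simp [glamRow, h0, hlast]

theorem ip0_glamRow_self (hn : 2 ≤ n) (lam : ℝ) :
    ip0 n (glamRow n lam) (glamRow n lam) = lam ^ 2 - 1 := by
  rw [ip0_glamRow hn]
  simp only [glamRow]
  split_ifs <;> first | omega | ring

theorem eq_zero_of_isotropic_of_last_eq_zero (hn : 1 ≤ n) {u : Fin n → ℝ}
    (hu : ip0 n u u = 0) (hlast : u ⟨n - 1, by omega⟩ = 0) : u = 0 := by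
  have hterm : ∀ i : Fin n, (i : ℕ) < n - 1 → eps n i * u i * u i = u i ^ 2 := fun i hi => by
    simp [eps, hi, sq]
  have hlast' : ∀ i : Fin n, ¬(i : ℕ) < n - 1 → u i = 0 := fun i hi => by
    rwa [show i = ⟨n - 1, by omega⟩ from Fin.ext (show (i : ℕ) = n - 1 by omega)]
  have hnonneg : ∀ i ∈ Finset.univ, 0 ≤ eps n i * u i * u i := by
    intro i _
    by_cases hi : (i : ℕ) < n - 1
    · rw [hterm i hi]
      positivity
    · simp [hlast' i hi]
  ext i
  by_cases hi : (i : ℕ) < n - 1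
  · have hi0 := (Finset.sum_eq_zero_iff_of_nonneg hnonneg).1 hu i (Finset.mem_univ i)
    rw [hterm i hi] at hi0
    exact pow_eq_zero_iff two_ne_zero |>.1 hi0
  · exact hlast' i hi

theorem exists_mem_Oset_mulVec_eq_glamRow_one (hn : 2 ≤ n) {u : Fin n → ℝ} (hu : u ≠ 0)
    (h0 : ip0 n u u = 0) : ∃ k ∈ Oset n, k *ᵥ u = glamRow n 1 := by
  have hiso : ip0 n (glamRow n 1) (glamRow n 1) = 0 := by
    rw [ip0_glamRow_self hn]
    norm_num
  have hiso' : ip0 n (glamRow n (-1)) (glamRow n (-1)) = 0 := by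
    rw [ip0_glamRow_self hn]
    norm_num
  rcases ne_or_eq (ip0 n u (glamRow n 1)) 0 with hs | hs
  · exact exists_mem_Oset_mulVec_eq_of_isotropic h0 hiso hs
  have hs' : ip0 n u (glamRow n (-1)) ≠ 0 := by
    rw [ip0_glamRow hn] at hs
    rw [ip0_glamRow hn]
    intro h
    exact hu (eq_zero_of_isotropic_of_last_eq_zero (by omega) h0 (by linarith))
  have hw : ip0 n (glamRow n (-1)) (glamRow n 1) ≠ 0 := by
    rw [ip0_glamRow hn]
    simp only [glamRow]
    split_ifs <;> first | omega | norm_num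
  obtain ⟨k₁, hk₁, hu₁⟩ := exists_mem_Oset_mulVec_eq_of_isotropic h0 hiso' hs'
  obtain ⟨k₂, hk₂, hu₂⟩ := exists_mem_Oset_mulVec_eq_of_isotropic hiso' hiso hw
  exact ⟨k₂ * k₁, mul_mem_Oset hk₂ hk₁, by rw [← mulVec_mulVec, hu₁, hu₂]⟩

theorem exists_mem_Oset_mulVec_eq_smul_glamRow_of_mul_pos (hn : 2 ≤ n) {u : Fin n → ℝ}
    {lam : ℝ} (hpos : 0 < ip0 n u u * (lam ^ 2 - 1)) :
    ∃ c : ℝ, c ≠ 0 ∧ ∃ k ∈ Oset n, k *ᵥ u = c • glamRow n lam := by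
  have hlam : lam ^ 2 - 1 ≠ 0 := by rintro h; simp [h] at hpos
  have hquot : 0 < ip0 n u u / (lam ^ 2 - 1) := by
    rw [← mul_div_mul_right (ip0 n u u) _ hlam, ← sq]
    exact div_pos hpos (sq_pos_of_ne_zero hlam)
  set c := Real.sqrt (ip0 n u u / (lam ^ 2 - 1))
  have hq : ip0 n u u = ip0 n (c • glamRow n lam) (c • glamRow n lam) := by
    rw [ip0_smul_left, ip0_smul_right, ip0_glamRow_self hn, ← mul_assoc, ← sq,
      Real.sq_sqrt hquot.le, div_mul_cancel₀ _ hlam]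
  refine ⟨c, (Real.sqrt_pos.2 hquot).ne', exists_mem_Oset_mulVec_eq hq ?_⟩
  rw [← hq]
  rintro h; simp [h] at hpos

theorem exists_mem_Oset_mulVec_eq_smul_glamRow (hn : 2 ≤ n) {u : Fin n → ℝ} (hu : u ≠ 0) :
    ∃ lam : ℝ, (lam = 0 ∨ lam = 1 ∨ lam = 2) ∧
      ∃ c : ℝ, c ≠ 0 ∧ ∃ k ∈ Oset n, k *ᵥ u = c • glamRow n lam := by
  rcases lt_trichotomy (ip0 n u u) 0 with hneg | h0 | hpos
  · exact ⟨0, Or.inl rfl, exists_mem_Oset_mulVec_eq_smul_glamRow_of_mul_pos hn (by nlinarith)⟩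
  · obtain ⟨k, hk, hku⟩ := exists_mem_Oset_mulVec_eq_glamRow_one hn hu h0
    exact ⟨1, Or.inr (Or.inl rfl), 1, one_ne_zero, k, hk, by rw [hku, one_smul]⟩
  · exact ⟨2, Or.inr (Or.inr rfl),
      exists_mem_Oset_mulVec_eq_smul_glamRow_of_mul_pos hn (by nlinarith)⟩

end GlamRow

section RowReduction

variable {n : ℕ}

theorem det_one_sub_vecMulVec_single_one (a : Fin n → ℝ) (l : Fin n) :
    (1 - vecMulVec a (Pi.single l 1)).det = 1 - a l := by
  rw [sub_eq_add_neg, ← neg_vecMulVec, vecMulVec_eq Unit,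
    det_one_add_replicateCol_mul_replicateRow, single_one_dotProduct, Pi.neg_apply,
    sub_eq_add_neg]

theorem exists_mem_Hset'_mul_mem_Glam (hn : 4 ≤ n) {M : Matrix (Fin n) (Fin n) ℝ}
    (hM : IsUnit M.det) {c lam : ℝ} (hc : c ≠ 0)
    (hrow : M ⟨n - 1, by omega⟩ = c • glamRow n lam) :
    ∃ h ∈ Hset' n, h * M ∈ Glam n hn lam := by
  set l : Fin n := ⟨n - 1, by omega⟩
  -- subtract multiples of the last row from the others to clear the last column, then
  -- rescale the last row by `c⁻¹`
  set a : Fin n → ℝ := M.col l - Pi.single l 1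
  set h := 1 - vecMulVec (c⁻¹ • a) (Pi.single l 1)
  have hMll : M l l = c := by simp [hrow, glamRow, l]
  have hal : a l = c - 1 := by simp [a, hMll]
  have hdet : h.det = c⁻¹ := by
    rw [det_one_sub_vecMulVec_single_one, Pi.smul_apply, hal, smul_eq_mul]
    field_simp
    ring
  have hhM : h * M = M - vecMulVec a (glamRow n lam) := by
    rw [sub_mul, Matrix.one_mul, vecMulVec_mul, single_one_vecMul, smul_vecMulVec,
      show M.row l = c • glamRow n lam from hrow, vecMulVec_smul, smul_smul, inv_mul_cancel₀ hc,
      one_smul]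
  have hH : h ∈ Hset' n := by
    refine ⟨by rw [det_transpose, hdet]; exact (Ne.isUnit (inv_ne_zero hc)), fun i j hij => ?_⟩
    have hji : j ≠ i := Fin.ne_of_val_ne (by omega)
    have hil : i ≠ l := Fin.ne_of_val_ne (by dsimp [l]; omega)
    simp [h, vecMulVec_apply, one_apply, hji, hil]
  refine ⟨h, hH, ?_, fun i => ?_, fun j => ?_⟩
  · rw [det_mul, hdet]
    exact (Ne.isUnit (inv_ne_zero hc)).mul hM
  · change (h * M) i l = if (i : ℕ) = n - 1 then 1 else 0
    have hwl : glamRow n lam l = 1 := by simp [glamRow, l]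
    have hil : (i : ℕ) = n - 1 ↔ i = l := by simp [l, Fin.ext_iff]
    rw [hhM]
    by_cases hi : i = l
    · rw [if_pos (hil.2 hi), hi]
      simp [a, vecMulVec_apply, hwl]
    · rw [if_neg (mt hil.1 hi)]
      simp [hi, a, vecMulVec_apply, hwl]
  · change (h * M) l j = glamRow n lam j
    rw [hhM, Matrix.sub_apply, vecMulVec_apply, hal, hrow, Pi.smul_apply, smul_eq_mul]
    ring

end RowReduction

/-- every `g ∈ GL(n,ℝ)` can be moved, by `h ∈ H'` on the left and
`k ∈ O(n-1,1)` on the right, into some `G_λ` with `λ ∈ {0,1,2}`, i.e. `hgk` has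
last column `eₙ` and last row `(-λ, 0, …, 0, 1)`. -/
theorem stmt3 (n : ℕ) (hn : 4 ≤ n) (g : Matrix (Fin n) (Fin n) ℝ) (hg : IsUnit g.det) :
    ∃ lam : ℝ, (lam = 0 ∨ lam = 1 ∨ lam = 2) ∧
      ∃ h ∈ Hset' n, ∃ k ∈ Oset n, h * g * k ∈ Glam n hn lam := by
  set l : Fin n := ⟨n - 1, by omega⟩
  have hgl : g l ≠ 0 := fun h0 =>
    hg.ne_zero (det_eq_zero_of_row_eq_zero l (congrFun h0))
  obtain ⟨lam, hlam, c, hc, k, hk, hkg⟩ := exists_mem_Oset_mulVec_eq_smul_glamRow (by omega) hgl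
  have hrow : (g * kᵀ) l = c • glamRow n lam := by
    rw [← hkg, ← vecMul_transpose]
    rfl
  have hdet : IsUnit (g * kᵀ).det := by
    rw [det_mul, det_transpose]
    exact hg.mul (isUnit_det_of_mem_Oset hk)
  obtain ⟨h, hH, hGlam⟩ := exists_mem_Hset'_mul_mem_Glam hn hdet hc hrow
  exact ⟨lam, hlam, h, hH, kᵀ, transpose_mem_Oset hk, by rwa [Matrix.mul_assoc]⟩
end
end

section
/- Let n ≥ 4 and let g ∈ G₀, i.e. g ∈ GL(n,ℝ) has last column eₙ and last row (0, …, 0, 1). Then there exist h ∈ H' and k ∈ O(n−1,1) such that h g k = Iₙ, the identity matrix. -/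
open Matrix

noncomputable section

/-! Cholesky (obtained from Mathlib's LDL decomposition) gives an invertible upper triangular `h`
with `h (g gᵀ) hᵀ = 1`, so `M = h g` is orthogonal and `k = Mᵀ` satisfies `h g k = 1`. Since the
last row of `g` is `eₙᵀ` and `h` is upper triangular, the last row of `M` is a multiple of `eₙᵀ`;
orthogonality forces the same for its last column, so `M` commutes with `I_{n-1,1}` and
`k ∈ O(n-1,1)`. Invertible upper triangular matrices lie in `H'`. -/

theorem Matrix.PosDef.exists_isUpperTriangular_mul_mul_transpose_eq_one
    {ι : Type*} [Fintype ι] [LinearOrder ι] [LocallyFiniteOrderTop ι] {S : Matrix ι ι ℝ}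
    (hS : S.PosDef) :
    ∃ h : Matrix ι ι ℝ, h.IsUpperTriangular ∧ IsUnit h ∧ h * S * hᵀ = 1 := by
  classical
  -- Mathlib's LDL decomposition for the reversed order produces an upper triangular factor.
  set e : ι ≃ ιᵒᵈ := OrderDual.toDual
  have hS' : (S.submatrix e.symm e.symm).PosDef := hS.submatrix e.symm.injective
  set W := (LDL.lowerInv hS').submatrix e e
  set d := fun i => LDL.diagEntries hS' (e i)
  have hW_upper : W.IsUpperTriangular := fun i j hji => LDL.lowerInv_triangular hS' hji
  have hW_unit : IsUnit W := by
    have := isUnit_of_invertible (LDL.lowerInv hS')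
    simpa [W, Matrix.isUnit_iff_isUnit_det, Matrix.det_submatrix_equiv_self] using this
  have hconj : W * S * Wᵀ = Matrix.diagonal d := by
    have := congrArg (Matrix.submatrix · e e) (LDL.diag_eq_lowerInv_conj hS')
    simp only [LDL.diag, Matrix.submatrix_diagonal_equiv] at this
    rw [show Matrix.diagonal d = _ from this, ← Matrix.submatrix_mul_equiv _ _ _ e,
      ← Matrix.submatrix_mul_equiv _ _ _ e]
    simp [W, conjTranspose_eq_transpose_of_trivial, Matrix.transpose_submatrix]
  have hd_pos : ∀ i, 0 < d i := by
    rw [← posDef_diagonal_iff, ← hconj]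
    simpa [Matrix.star_eq_conjTranspose] using (hW_unit.posDef_star_right_conjugate_iff).mpr hS
  set D := Matrix.diagonal fun i => (√(d i))⁻¹
  refine ⟨D * W, (Matrix.blockTriangular_diagonal _).mul hW_upper, ?_, ?_⟩
  · refine (Matrix.isUnit_diagonal.mpr (Pi.isUnit_iff.mpr fun i => ?_)).mul hW_unit
    exact (inv_pos.mpr (Real.sqrt_pos.mpr (hd_pos i))).ne'.isUnit
  · calc D * W * S * (D * W)ᵀ = D * (W * S * Wᵀ) * D := by
          simp only [D, Matrix.transpose_mul, Matrix.diagonal_transpose, Matrix.mul_assoc]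
      _ = 1 := by
          rw [hconj, Matrix.diagonal_mul_diagonal, Matrix.diagonal_mul_diagonal,
            ← Matrix.diagonal_one]
          congr 1
          funext i
          calc (√(d i))⁻¹ * d i * (√(d i))⁻¹ = d i / (√(d i) * √(d i)) := by ring
            _ = 1 := by rw [Real.mul_self_sqrt (hd_pos i).le, div_self (hd_pos i).ne']

namespace Matrix

variable {ι R : Type*} [Fintype ι] [Semiring R] {p : ι} {A B : Matrix ι ι R}

theorem mul_apply_eq_zero_of_row_eq_zero (hA : ∀ j, j ≠ p → A p j = 0)
    (hB : ∀ j, j ≠ p → B p j = 0) {j : ι} (hj : j ≠ p) : (A * B) p j = 0 := by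
  rw [Matrix.mul_apply, Finset.sum_eq_single p (fun k _ hk => by rw [hA k hk, zero_mul])
    (fun hp => absurd (Finset.mem_univ p) hp), hB j hj, mul_zero]

theorem col_eq_zero_of_mul_transpose_eq_one_of_row_eq_zero [DecidableEq ι] [NoZeroDivisors R]
    [Nontrivial R] (hA : A * Aᵀ = 1)
    (hrow : ∀ j, j ≠ p → A p j = 0) {i : ι} (hi : i ≠ p) : A i p = 0 := by
  have hentry : ∀ i, (A * Aᵀ) i p = A i p * A p p := fun i => by
    rw [Matrix.mul_apply, Finset.sum_eq_single p
      (fun k _ hk => by rw [Matrix.transpose_apply, hrow k hk, mul_zero])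
      (fun hp => absurd (Finset.mem_univ p) hp), Matrix.transpose_apply]
  have hpp : A p p * A p p = 1 := by rw [← hentry, hA, Matrix.one_apply_eq]
  have hip : A i p * A p p = 0 := by rw [← hentry, hA, Matrix.one_apply_ne hi]
  exact (mul_eq_zero.mp hip).resolve_right (left_ne_zero_of_mul_eq_one hpp)

end Matrix

theorem commute_Inm_of_row_col_last {m : ℕ} {A : Matrix (Fin (m + 1)) (Fin (m + 1)) ℝ}
    (hrow : ∀ j, j ≠ Fin.last m → A (Fin.last m) j = 0)
    (hcol : ∀ i, i ≠ Fin.last m → A i (Fin.last m) = 0) : Commute A (Inm (m + 1)) := by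
  ext i j
  simp only [Inm, Matrix.mul_diagonal, Matrix.diagonal_mul, add_tsub_cancel_right]
  rcases eq_or_ne i (Fin.last m) with rfl | hi <;> rcases eq_or_ne j (Fin.last m) with rfl | hj
  · ring
  · simp [hrow j hj]
  · simp [hcol i hi]
  · simp [Fin.val_lt_last hi, Fin.val_lt_last hj]

theorem mem_Hset'_of_isUpperTriangular {n : ℕ} {h : Matrix (Fin n) (Fin n) ℝ}
    (h_upper : h.IsUpperTriangular) (h_unit : IsUnit h) : h ∈ Hset' n := by
  refine ⟨by rwa [Matrix.det_transpose, ← Matrix.isUnit_iff_isUnit_det], fun i j hij => ?_⟩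
  exact h_upper (show i < j by rw [Fin.lt_def]; omega)

theorem row_last_eq_zero_of_mem_Glam_zero {m : ℕ} {hn : 4 ≤ m + 1}
    {g : Matrix (Fin (m + 1)) (Fin (m + 1)) ℝ} (hg : g ∈ Glam (m + 1) hn 0) {j : Fin (m + 1)}
    (hj : j ≠ Fin.last m) : g (Fin.last m) j = 0 := by
  refine (hg.2.2 j).trans ?_
  simp [(Fin.val_lt_last hj).ne]

/-- every `g ∈ G₀` satisfies `h g k = Iₙ` for some `h ∈ H'`, `k ∈ O(n-1,1)`. -/
theorem stmt4 (n : ℕ) (hn : 4 ≤ n) (g : Matrix (Fin n) (Fin n) ℝ)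
    (hg : g ∈ Glam n hn 0) :
    ∃ h ∈ Hset' n, ∃ k ∈ Oset n, h * g * k = 1 := by
  obtain ⟨m, rfl⟩ : ∃ m, n = m + 1 := ⟨n - 1, by omega⟩
  have hS : (g * gᵀ).PosDef := by
    simpa using Matrix.PosDef.mul_conjTranspose_self g
      (Matrix.vecMul_injective_iff_isUnit.mpr ((Matrix.isUnit_iff_isUnit_det g).mpr hg.1))
  obtain ⟨h, h_upper, h_unit, h_orth⟩ := hS.exists_isUpperTriangular_mul_mul_transpose_eq_one
  set M := h * g
  have hM : M * Mᵀ = 1 := by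
    rw [Matrix.transpose_mul, ← h_orth]
    simp only [M, Matrix.mul_assoc]
  have hrow : ∀ j, j ≠ Fin.last m → M (Fin.last m) j = 0 := fun j hj =>
    Matrix.mul_apply_eq_zero_of_row_eq_zero (fun k hk => h_upper (Fin.lt_last_iff_ne_last.mpr hk))
      (fun k hk => row_last_eq_zero_of_mem_Glam_zero hg hk) hj
  have hJ : Commute M (Inm (m + 1)) :=
    commute_Inm_of_row_col_last hrow fun i hi =>
      Matrix.col_eq_zero_of_mul_transpose_eq_one_of_row_eq_zero hM hrow hi
  refine ⟨h, mem_Hset'_of_isUpperTriangular h_upper h_unit, Mᵀ, ?_, ?_⟩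
  · show Mᵀᵀ * Inm (m + 1) * Mᵀ = Inm (m + 1)
    rw [Matrix.transpose_transpose, hJ.eq, Matrix.mul_assoc, hM, Matrix.mul_one]
  · exact hM
end
end

section
/- Let n ≥ 4, (λ, ξ) ∈ Λ = {(0,0), (1,0), (1,1), (2,0), (2,√3), (2,2)}, let ∇ be the bilinear map on 𝔤 satisfying the Koszul formula for ⟨·,·⟩_{λ,ξ}, and let R(X,Y)Z := ∇_X(∇_YZ) − ∇_Y(∇_XZ) − ∇_{[X,Y]}Z. Then R(X,Y)Z = 0 for all X, Y, Z ∈ 𝔤 if and only if (λ, ξ) = (1, 0). (That is, exactly one of the six left-invariant Lorentzian metrics on H₃ × ℝ^{n−3} is flat.) -/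
open Matrix

noncomputable section

/-!
The bracket is `[X, Y] = b(X, Y) eₙ` with `b(X, Y) = x₁y₂ - x₂y₁`. Writing `φ = ⟨eₙ, ·⟩_{λ,ξ}`, the
Koszul formula reads `2⟨∇_X Y, Z⟩ = b(X, Y) φ(Z) + z₁ (y₂ φ(X) + x₂ φ(Y)) - z₂ (x₁ φ(Y) + y₁ φ(X))`,
so `∇` is explicit once the functionals `z ↦ z₁` and `z ↦ z₂` are represented through the metric.
For `(λ, ξ) = (1, 0)` this gives `∇_X Y = x₁y₁ e₂ + x₁y₂ eₙ`, whose curvature vanishes identically.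
In general `R(e₁, e₂)e₂ = -¼ λ (1 + ξ² - λ²) eₙ - ¾ (λ² - 1) s` with `⟨s, z⟩_{λ,ξ} = z₁`; its first
and last coordinates are `-¾ (λ² - 1)(1 + ξ² - λ²)` and `¼ λ (4λ² - ξ² - 4)`, and `(1, 0)` is the
only point of `Λ` where both vanish.
-/

namespace HeisenbergLorentz

section SignatureForm

variable {n : ℕ}

lemma eps_ne_zero (i : Fin n) : eps n i ≠ 0 := by
  unfold eps; split_ifs <;> norm_num

lemma eps_of_lt {i : Fin n} (hi : (i : ℕ) < n - 1) : eps n i = 1 := if_pos hi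

lemma ip0_add_left (x y z : Fin n → ℝ) : ip0 n (x + y) z = ip0 n x z + ip0 n y z := by
  simp only [ip0, Pi.add_apply, mul_add, add_mul, Finset.sum_add_distrib]

lemma ip0_smul_left (c : ℝ) (x z : Fin n → ℝ) : ip0 n (c • x) z = c * ip0 n x z := by
  simp only [ip0, Pi.smul_apply, smul_eq_mul, Finset.mul_sum]
  exact Finset.sum_congr rfl fun i _ => by ring

lemma ip0_sub_left (x y z : Fin n → ℝ) : ip0 n (x - y) z = ip0 n x z - ip0 n y z := by
  simp only [ip0, Pi.sub_apply, mul_sub, sub_mul, Finset.sum_sub_distrib]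

lemma ip0_comm (x y : Fin n → ℝ) : ip0 n x y = ip0 n y x :=
  Finset.sum_congr rfl fun i _ => by ring

lemma ip0_single_right (x : Fin n → ℝ) (i : Fin n) : ip0 n x (Pi.single i 1) = eps n i * x i := by
  rw [ip0, Finset.sum_eq_single i (fun j _ hj => by simp [hj]) (by simp)]
  simp

lemma ip0_single_left (x : Fin n → ℝ) (i : Fin n) : ip0 n (Pi.single i 1) x = eps n i * x i := by
  rw [ip0_comm, ip0_single_right]

lemma ip0_update_update (x y : Fin n → ℝ) (i : Fin n) (a b : ℝ) :
    ip0 n (Function.update x i a) (Function.update y i b)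
      = ip0 n x y + eps n i * (a * b - x i * y i) := by
  simp only [ip0]
  rw [← Finset.add_sum_erase _ _ (Finset.mem_univ i),
    ← Finset.add_sum_erase _ _ (Finset.mem_univ i),
    Finset.sum_congr rfl fun j hj => by
      rw [Function.update_of_ne (Finset.ne_of_mem_erase hj),
        Function.update_of_ne (Finset.ne_of_mem_erase hj)]]
  simp only [Function.update_self]
  ring

lemma eq_of_forall_ip0_eq {x y : Fin n → ℝ} (h : ∀ z, ip0 n x z = ip0 n y z) : x = y := by
  funext i
  have hi := h (Pi.single i 1)
  rw [ip0_single_right, ip0_single_right] at hi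
  exact mul_left_cancel₀ (eps_ne_zero i) hi

lemma eq_of_forall_ip0_mulVec_eq {M : Matrix (Fin n) (Fin n) ℝ} (hM : IsUnit M)
    {x y : Fin n → ℝ} (h : ∀ z, ip0 n (M *ᵥ x) (M *ᵥ z) = ip0 n (M *ᵥ y) (M *ᵥ z)) : x = y := by
  refine Matrix.mulVec_injective_iff_isUnit.2 hM (eq_of_forall_ip0_eq fun w => ?_)
  have hw : M *ᵥ (M⁻¹ *ᵥ w) = w := by
    rw [Matrix.mulVec_mulVec, Matrix.mul_nonsing_inv _ ((Matrix.isUnit_iff_isUnit_det M).1 hM),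
      Matrix.one_mulVec]
  simpa only [hw] using h (M⁻¹ *ᵥ w)

end SignatureForm

section Metric

variable {n : ℕ} (hn : 4 ≤ n) (lam xi : ℝ)

-- Zero-based: `i0`, `i1`, `iXi`, `iLast` are the indices `1, 2, n - 1, n` of the paper.
abbrev i0 : Fin n := ⟨0, by omega⟩
abbrev i1 : Fin n := ⟨1, by omega⟩
abbrev iXi : Fin n := ⟨n - 2, by omega⟩
abbrev iLast : Fin n := ⟨n - 1, by omega⟩

lemma eps_iLast : eps n (iLast hn) = -1 := if_neg (lt_irrefl _)

def headInv (z : Fin n → ℝ) : ℝ := z (i0 hn) - xi * z (iXi hn) - lam * z (iLast hn)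

lemma gmat_mul_eq_one :
    gmat n hn lam xi
        * (1 - Matrix.single (i0 hn) (iXi hn) xi - Matrix.single (i0 hn) (iLast hn) lam) = 1 := by
  have hXi : iXi hn ≠ i0 hn := by simp only [ne_eq, Fin.ext_iff]; omega
  have hLast : iLast hn ≠ i0 hn := by simp only [ne_eq, Fin.ext_iff]; omega
  simp only [gmat, mul_sub, add_mul, one_mul, mul_one, Matrix.single_mul_single_of_ne, hXi,
    hLast, ne_eq, not_false_eq_true]
  abel

lemma isUnit_gmat_inv : IsUnit (gmat n hn lam xi)⁻¹ :=
  (Matrix.isUnit_iff_isUnit_det _).2 <|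
    Matrix.isUnit_nonsing_inv_det _ (Matrix.isUnit_det_of_right_inverse (gmat_mul_eq_one hn lam xi))

lemma gmat_inv_mulVec (z : Fin n → ℝ) :
    (gmat n hn lam xi)⁻¹ *ᵥ z = Function.update z (i0 hn) (headInv hn lam xi z) := by
  rw [Matrix.inv_eq_right_inv (gmat_mul_eq_one hn lam xi)]
  funext i
  simp only [Matrix.sub_mulVec, Matrix.one_mulVec, Matrix.single_mulVec, Pi.sub_apply,
    Function.update_apply, headInv]
  split_ifs <;> simp_all

lemma ipg_eq (x y : Fin n → ℝ) :
    ipg n hn lam xi x y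
      = ip0 n x y - x (i0 hn) * y (i0 hn) + headInv hn lam xi x * headInv hn lam xi y := by
  rw [ipg, gmat_inv_mulVec, gmat_inv_mulVec, ip0_update_update, eps_of_lt (by simp only; omega)]
  ring

lemma ipg_add_left (x y z : Fin n → ℝ) :
    ipg n hn lam xi (x + y) z = ipg n hn lam xi x z + ipg n hn lam xi y z := by
  simp only [ipg, Matrix.mulVec_add, ip0_add_left]

lemma ipg_smul_left (c : ℝ) (x z : Fin n → ℝ) :
    ipg n hn lam xi (c • x) z = c * ipg n hn lam xi x z := by
  simp only [ipg, Matrix.mulVec_smul, ip0_smul_left]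

lemma ipg_sub_left (x y z : Fin n → ℝ) :
    ipg n hn lam xi (x - y) z = ipg n hn lam xi x z - ipg n hn lam xi y z := by
  simp only [ipg, Matrix.mulVec_sub, ip0_sub_left]

lemma eq_of_forall_ipg_eq {x y : Fin n → ℝ}
    (h : ∀ z, ipg n hn lam xi x z = ipg n hn lam xi y z) : x = y :=
  eq_of_forall_ip0_mulVec_eq (isUnit_gmat_inv hn lam xi) h

def centralForm (z : Fin n → ℝ) : ℝ := -z (iLast hn) - lam * headInv hn lam xi z

-- `g_{λ,ξ} I_{n-1,1} g_{λ,ξ}ᵀ e₁`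
def sharpZero : Fin n → ℝ :=
  (1 + xi ^ 2 - lam ^ 2) • Pi.single (i0 hn) 1 + xi • Pi.single (iXi hn) 1
    - lam • Pi.single (iLast hn) 1

lemma ipg_single_left (j : Fin n) (z : Fin n → ℝ) :
    ipg n hn lam xi (Pi.single j 1) z
      = eps n j * z j - (Pi.single j 1 : Fin n → ℝ) (i0 hn) * z (i0 hn)
        + headInv hn lam xi (Pi.single j 1) * headInv hn lam xi z := by
  rw [ipg_eq, ip0_single_left]

lemma ipg_single_i1 (z : Fin n → ℝ) : ipg n hn lam xi (Pi.single (i1 hn) 1) z = z (i1 hn) := by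
  simp (disch := (try simp only [ne_eq, Fin.ext_iff]); omega) only [ipg_single_left, headInv,
    eps_of_lt, Pi.single_eq_of_ne]
  ring

lemma ipg_single_iLast (z : Fin n → ℝ) :
    ipg n hn lam xi (Pi.single (iLast hn) 1) z = centralForm hn lam xi z := by
  simp (disch := (try simp only [ne_eq, Fin.ext_iff]); omega) only [ipg_single_left, headInv,
    centralForm, eps_iLast, Pi.single_eq_same, Pi.single_eq_of_ne]
  ring

lemma ipg_sharpZero (z : Fin n → ℝ) : ipg n hn lam xi (sharpZero hn lam xi) z = z (i0 hn) := by
  simp (disch := (try simp only [ne_eq, Fin.ext_iff]); omega) only [sharpZero, ipg_add_left,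
    ipg_sub_left, ipg_smul_left, ipg_single_left, headInv, eps_of_lt, eps_iLast,
    Pi.single_eq_same, Pi.single_eq_of_ne]
  ring

end Metric

section LeviCivita

variable {n : ℕ} (hn : 4 ≤ n) (lam xi : ℝ)

lemma ipg_bral (X Y z : Fin n → ℝ) :
    ipg n hn lam xi (bral n hn X Y) z
      = (X (i0 hn) * Y (i1 hn) - X (i1 hn) * Y (i0 hn)) * centralForm hn lam xi z := by
  rw [bral, ipg_smul_left, ipg_single_iLast]

def leviCivita (X Y : Fin n → ℝ) : Fin n → ℝ :=
  (1 / 2 : ℝ) • (bral n hn X Y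
    + (Y (i1 hn) * centralForm hn lam xi X + X (i1 hn) * centralForm hn lam xi Y)
      • sharpZero hn lam xi
    - (X (i0 hn) * centralForm hn lam xi Y + Y (i0 hn) * centralForm hn lam xi X)
      • Pi.single (i1 hn) 1)

lemma koszul_leviCivita (X Y Z : Fin n → ℝ) :
    2 * ipg n hn lam xi (leviCivita hn lam xi X Y) Z
      = ipg n hn lam xi (bral n hn X Y) Z - ipg n hn lam xi (bral n hn Y Z) X
        + ipg n hn lam xi (bral n hn Z X) Y := by
  simp only [leviCivita, ipg_smul_left, ipg_add_left, ipg_sub_left, ipg_bral, ipg_sharpZero,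
    ipg_single_i1]
  ring

lemma eq_leviCivita_of_koszul (nab : (Fin n → ℝ) → (Fin n → ℝ) → Fin n → ℝ)
    (hK : ∀ X Y Z : Fin n → ℝ,
      2 * ipg n hn lam xi (nab X Y) Z
        = ipg n hn lam xi (bral n hn X Y) Z - ipg n hn lam xi (bral n hn Y Z) X
          + ipg n hn lam xi (bral n hn Z X) Y) :
    nab = leviCivita hn lam xi := by
  funext X Y
  refine eq_of_forall_ipg_eq hn lam xi fun Z => ?_
  linarith [hK X Y Z, koszul_leviCivita hn lam xi X Y Z]

end LeviCivita

section Curvature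

variable {n : ℕ} (hn : 4 ≤ n)

def curvature (nab : (Fin n → ℝ) → (Fin n → ℝ) → Fin n → ℝ) (X Y Z : Fin n → ℝ) : Fin n → ℝ :=
  nab X (nab Y Z) - nab Y (nab X Z) - nab (bral n hn X Y) Z

lemma leviCivita_one_zero (X Y : Fin n → ℝ) :
    leviCivita hn 1 0 X Y
      = (X (i0 hn) * Y (i0 hn)) • Pi.single (i1 hn) 1
        + (X (i0 hn) * Y (i1 hn)) • Pi.single (iLast hn) 1 := by
  simp only [leviCivita, bral, sharpZero, centralForm, headInv]
  module

lemma curvature_leviCivita_one_zero (X Y Z : Fin n → ℝ) :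
    curvature hn (leviCivita hn 1 0) X Y Z = 0 := by
  simp only [curvature, leviCivita_one_zero, bral, Pi.add_apply, Pi.smul_apply, smul_eq_mul]
  simp (disch := (try simp only [ne_eq, Fin.ext_iff]); omega) only [Pi.single_eq_same,
    Pi.single_eq_of_ne]
  module

variable (lam xi : ℝ)

lemma curvature_leviCivita_single_i0_single_i1 :
    curvature hn (leviCivita hn lam xi)
        (Pi.single (i0 hn) 1) (Pi.single (i1 hn) 1) (Pi.single (i1 hn) 1)
      = (-(lam * (1 + xi ^ 2 - lam ^ 2)) / 4) • Pi.single (iLast hn) 1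
        - (3 * (lam ^ 2 - 1) / 4) • sharpZero hn lam xi := by
  simp only [curvature, leviCivita, bral, centralForm, headInv, sharpZero, Pi.add_apply,
    Pi.sub_apply, Pi.smul_apply, smul_eq_mul]
  simp (disch := (try simp only [ne_eq, Fin.ext_iff]); omega) only [Pi.single_eq_same,
    Pi.single_eq_of_ne]
  module

end Curvature

lemma eq_one_zero_of_mem_Lam {lam xi : ℝ} (hmem : (lam, xi) ∈ Lam)
    (h₁ : (lam ^ 2 - 1) * (1 + xi ^ 2 - lam ^ 2) = 0) (h₂ : lam * (4 * lam ^ 2 - xi ^ 2 - 4) = 0) :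
    lam = 1 ∧ xi = 0 := by
  have hsqrt : Real.sqrt 3 ^ 2 = 3 := Real.sq_sqrt (by norm_num)
  simp only [Lam, Set.mem_insert_iff, Set.mem_singleton_iff, Prod.mk.injEq] at hmem
  rcases hmem with ⟨rfl, rfl⟩ | ⟨rfl, rfl⟩ | ⟨rfl, rfl⟩ | ⟨rfl, rfl⟩ | ⟨rfl, rfl⟩ | ⟨rfl, rfl⟩ <;>
    first | exact ⟨rfl, rfl⟩ | (norm_num at h₁; done) | norm_num [hsqrt] at h₂

lemma curvature_leviCivita_eq_zero_iff {n : ℕ} (hn : 4 ≤ n) {lam xi : ℝ} (hmem : (lam, xi) ∈ Lam) :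
    (∀ X Y Z : Fin n → ℝ, curvature hn (leviCivita hn lam xi) X Y Z = 0) ↔ lam = 1 ∧ xi = 0 := by
  refine ⟨fun hflat => ?_, fun ⟨hlam, hxi⟩ => hlam ▸ hxi ▸ curvature_leviCivita_one_zero hn⟩
  have h := curvature_leviCivita_single_i0_single_i1 hn lam xi ▸
    hflat (Pi.single (i0 hn) 1) (Pi.single (i1 hn) 1) (Pi.single (i1 hn) 1)
  have h₀ := congrFun h (i0 hn)
  have hLast := congrFun h (iLast hn)
  simp only [sharpZero, Pi.sub_apply, Pi.add_apply, Pi.smul_apply, smul_eq_mul,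
    Pi.zero_apply] at h₀ hLast
  simp (disch := (try simp only [ne_eq, Fin.ext_iff]); omega) only [Pi.single_eq_same,
    Pi.single_eq_of_ne] at h₀ hLast
  exact eq_one_zero_of_mem_Lam hmem (by linear_combination -(4 / 3) * h₀)
    (by linear_combination 4 * hLast)

end HeisenbergLorentz

/-- for `(λ,ξ) ∈ Λ`, the curvature tensor of `(𝔤, ⟨·,·⟩_{λ,ξ})` vanishes
identically if and only if `(λ,ξ) = (1,0)`; exactly one of the six left-invariant
Lorentzian metrics on `H₃ × ℝ^{n-3}` is flat. -/
theorem stmt16 (n : ℕ) (hn : 4 ≤ n) (lam xi : ℝ) (hmem : (lam, xi) ∈ Lam)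
    (nab : (Fin n → ℝ) →ₗ[ℝ] (Fin n → ℝ) →ₗ[ℝ] (Fin n → ℝ))
    (hK : ∀ X Y Z : Fin n → ℝ,
      2 * ipg n hn lam xi (nab X Y) Z
        = ipg n hn lam xi (bral n hn X Y) Z - ipg n hn lam xi (bral n hn Y Z) X
          + ipg n hn lam xi (bral n hn Z X) Y) :
    (∀ X Y Z : Fin n → ℝ,
        nab X (nab Y Z) - nab Y (nab X Z) - nab (bral n hn X Y) Z = 0)
      ↔ (lam = 1 ∧ xi = 0) := by
  rw [← HeisenbergLorentz.curvature_leviCivita_eq_zero_iff hn hmem,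
    ← HeisenbergLorentz.eq_leviCivita_of_koszul hn lam xi (fun X Y => nab X Y) hK]
  rfl

end
end
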